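/- arXiv:2508.02971 — 3 statements merged into one kernel-verified Lean document; each statement's English description precedes it below -/
import Mathlib

section
/- Let r>0, σ>0, K>0, and for q>rK define γ_p = -2r/σ², g = 1 + rK/q, S_ℓ(q) = (q/(r+σ²/2))·(g - g^{1/γ_p}) and S_u(q) = (q/(r+σ²/2))·(g^{1-1/γ_p} - 1). Then lim_{q→∞} S_ℓ(q) = K and lim_{q→∞} S_u(q) = K. -/
open Real Filter

private lemma slope_rpow_one_add (b : ℝ) :
    Tendsto (fun x : ℝ => ((1 + x) ^ b - 1) / x) (nhdsWithin 0 (Set.Ioi 0)) (nhds b) := by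
  have h0 : HasDerivAt (fun x : ℝ => 1 + x) 1 0 := by
    simpa using (hasDerivAt_id (0 : ℝ)).const_add 1
  have h1 : HasDerivAt (fun x : ℝ => (1 + x) ^ b) b 0 := by
    have hr : HasDerivAt (fun y : ℝ => y ^ b) (b * (1 : ℝ) ^ (b - 1)) ((fun x : ℝ => 1 + x) 0) := by
      simpa using Real.hasDerivAt_rpow_const (x := (1 : ℝ)) (p := b) (Or.inl one_ne_zero)
    simpa [Real.one_rpow, Function.comp_def] using hr.comp 0 h0
  have h2 := hasDerivAt_iff_tendsto_slope.mp h1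
  have h3 : Tendsto (slope (fun x : ℝ => (1 + x) ^ b) 0) (nhdsWithin 0 (Set.Ioi 0)) (nhds b) :=
    h2.mono_left (nhdsWithin_mono _ (fun x hx => ne_of_gt hx))
  refine h3.congr (fun x => ?_)
  simp [slope_def_field, Real.one_rpow]

theorem ci_put_boundary_collapse
    (r σ K : ℝ) (hr : 0 < r) (hσ : 0 < σ) (hK : 0 < K)
    (γ : ℝ) (hγ : γ = -2 * r / σ ^ 2)
    (g Sl Su : ℝ → ℝ)
    (hg : ∀ q, g q = 1 + r * K / q)
    (hSl : ∀ q, Sl q = q / (r + σ ^ 2 / 2) * (g q - g q ^ (1 / γ)))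
    (hSu : ∀ q, Su q = q / (r + σ ^ 2 / 2) * (g q ^ (1 - 1 / γ) - 1)) :
    Tendsto Sl atTop (nhds K) ∧ Tendsto Su atTop (nhds K) := by
  set c : ℝ := r + σ ^ 2 / 2 with hc
  have hcpos : 0 < c := by positivity
  have hγneg : γ < 0 := by
    rw [hγ]
    apply div_neg_of_neg_of_pos
    · nlinarith
    · positivity
  have hγ0 : γ ≠ 0 := ne_of_lt hγneg
  -- key algebraic identity
  have key : r * K / c * (1 - 1 / γ) = K := by
    rw [hγ, hc]
    field_simp
    ring
  -- epsilon tends to 0+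
  have hε : Tendsto (fun q : ℝ => r * K / q) atTop (nhdsWithin 0 (Set.Ioi 0)) := by
    rw [tendsto_nhdsWithin_iff]
    constructor
    · exact tendsto_const_nhds.div_atTop tendsto_id
    · filter_upwards [eventually_gt_atTop (0 : ℝ)] with q hq
      exact div_pos (by positivity) hq
  have hSlope1 := (slope_rpow_one_add (1 / γ)).comp hε
  have hSlope2 := (slope_rpow_one_add (1 - 1 / γ)).comp hε
  constructor
  · have hL : Tendsto
        (fun q : ℝ => r * K / c * (1 - ((1 + r * K / q) ^ (1 / γ) - 1) / (r * K / q)))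
        atTop (nhds (r * K / c * (1 - 1 / γ))) :=
      (tendsto_const_nhds.sub hSlope1).const_mul _
    rw [key] at hL
    refine hL.congr' ?_
    filter_upwards [eventually_gt_atTop (0 : ℝ)] with q hq
    rw [hSl q, hg q]
    have hq0 : q ≠ 0 := ne_of_gt hq
    have hrk : r * K ≠ 0 := by positivity
    field_simp
    ring
  · have hL : Tendsto
        (fun q : ℝ => r * K / c * (((1 + r * K / q) ^ (1 - 1 / γ) - 1) / (r * K / q)))
        atTop (nhds (r * K / c * (1 - 1 / γ))) :=
      hSlope2.const_mul _
    rw [key] at hL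
    refine hL.congr' ?_
    filter_upwards [eventually_gt_atTop (0 : ℝ)] with q hq
    rw [hSu q, hg q]
    have hq0 : q ≠ 0 := ne_of_gt hq
    have hrk : r * K ≠ 0 := by positivity
    field_simp
end

section
/- Let r>0, σ>0, K>0, and define S_ℓ(q), S_u(q) as the boundaries of a perpetual CI put: with γ_p = -2r/σ², g = 1+rK/q, S_ℓ(q) = (q/(r+σ²/2))(g - g^{1/γ_p}), S_u(q) = (q/(r+σ²/2))(g^{1-1/γ_p} - 1). Then lim_{q→∞} q·(S_u(q) - S_ℓ(q)) = σ²K²/2. -/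
open Real Filter

lemma rpow_taylor2 (a : ℝ) :
    Tendsto (fun x : ℝ => ((1 + x) ^ a - 1 - a * x) / x ^ 2) (nhdsWithin 0 (Set.Ioi 0))
      (nhds (a * (a - 1) / 2)) := by
  have hf' : ∀ x : ℝ, 0 < x →
      HasDerivAt (fun x : ℝ => (1 + x) ^ a - 1 - a * x) (a * (1 + x) ^ (a - 1) - a) x := by
    intro x hx
    have h1 : HasDerivAt (fun x : ℝ => 1 + x) 1 x := (hasDerivAt_id x).const_add 1
    have h2 := h1.rpow_const (p := a) (Or.inl (by linarith))
    have h3 := (h2.sub_const 1).sub ((hasDerivAt_id x).const_mul a)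
    exact h3.congr_deriv (by ring)
  have hg' : ∀ x : ℝ, HasDerivAt (fun x : ℝ => x ^ 2) (2 * x) x := by
    intro x
    simpa using hasDerivAt_pow 2 x
  have hslope : HasDerivAt (fun t : ℝ => (1 + t) ^ (a - 1)) (a - 1) 0 := by
    have h1 : HasDerivAt (fun t : ℝ => 1 + t) 1 0 := (hasDerivAt_id 0).const_add 1
    have h2 := h1.rpow_const (p := a - 1) (Or.inl (by norm_num))
    simpa using h2
  have hdiv : Tendsto (fun x : ℝ => (a * (1 + x) ^ (a - 1) - a) / (2 * x))
      (nhdsWithin 0 (Set.Ioi 0)) (nhds (a * (a - 1) / 2)) := by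
    have h := hslope.tendsto_slope_zero_right
    have h2 := h.const_mul (a / 2)
    refine Tendsto.congr' ?_ (by convert h2 using 2; ring)
    filter_upwards [self_mem_nhdsWithin] with x hx
    have hx0 : x ≠ 0 := ne_of_gt hx
    simp only [smul_eq_mul, zero_add, add_zero, Real.one_rpow]
    field_simp
  apply HasDerivAt.lhopital_zero_nhdsGT
    (f' := fun x => a * (1 + x) ^ (a - 1) - a) (g' := fun x => 2 * x)
  · filter_upwards [self_mem_nhdsWithin] with x hx using hf' x hx
  · filter_upwards [self_mem_nhdsWithin] with x hx using hg' x
  · filter_upwards [self_mem_nhdsWithin] with x hx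
    exact mul_ne_zero two_ne_zero (ne_of_gt hx)
  · have : ContinuousAt (fun x : ℝ => (1 + x) ^ a - 1 - a * x) 0 := by
      have h1 : HasDerivAt (fun x : ℝ => 1 + x) 1 0 := (hasDerivAt_id 0).const_add 1
      exact (((h1.rpow_const (p := a) (Or.inl (by norm_num))).sub_const 1).sub
        ((hasDerivAt_id 0).const_mul a)).continuousAt
    have := this.tendsto.mono_left (nhdsWithin_le_nhds (s := Set.Ioi (0:ℝ)))
    simpa using this
  · have := ((continuous_pow 2).tendsto (0:ℝ)).mono_left
      (nhdsWithin_le_nhds (s := Set.Ioi (0:ℝ)))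
    simpa using this
  · exact hdiv

theorem ci_put_boundary_width_limit
    (r σ K : ℝ) (hr : 0 < r) (hσ : 0 < σ) (hK : 0 < K)
    (γ : ℝ) (hγ : γ = -2 * r / σ ^ 2)
    (g Sl Su : ℝ → ℝ)
    (hg : ∀ q, g q = 1 + r * K / q)
    (hSl : ∀ q, Sl q = q / (r + σ ^ 2 / 2) * (g q - g q ^ (1 / γ)))
    (hSu : ∀ q, Su q = q / (r + σ ^ 2 / 2) * (g q ^ (1 - 1 / γ) - 1)) :
    Tendsto (fun q => q * (Su q - Sl q)) atTop (nhds (σ ^ 2 * K ^ 2 / 2)) := by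
  set c : ℝ := 1 / γ with hc
  have hσ2 : (0:ℝ) < σ ^ 2 := by positivity
  have hD : (0:ℝ) < r + σ ^ 2 / 2 := by positivity
  set C : ℝ := r ^ 2 * K ^ 2 / (r + σ ^ 2 / 2) with hC
  -- inner limit
  have hF : Tendsto (fun x : ℝ => ((1 + x) ^ (1 - c) - 1 - (1 - c) * x) / x ^ 2
      + ((1 + x) ^ c - 1 - c * x) / x ^ 2) (nhdsWithin 0 (Set.Ioi 0))
      (nhds ((1 - c) * ((1 - c) - 1) / 2 + c * (c - 1) / 2)) :=
    (rpow_taylor2 (1 - c)).add (rpow_taylor2 c)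
  -- x tends to 0 from the right
  have hx0 : Tendsto (fun q : ℝ => r * K / q) atTop (nhdsWithin 0 (Set.Ioi 0)) := by
    rw [tendsto_nhdsWithin_iff]
    constructor
    · simpa [div_eq_mul_inv] using tendsto_inv_atTop_zero.const_mul (r * K)
    · filter_upwards [eventually_gt_atTop (0:ℝ)] with q hq
      exact Set.mem_Ioi.mpr (by positivity)
  have hcomp := (hF.comp hx0).const_mul C
  -- value identity
  have hval : C * ((1 - c) * ((1 - c) - 1) / 2 + c * (c - 1) / 2) = σ ^ 2 * K ^ 2 / 2 := by
    have hγne : γ ≠ 0 := by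
      rw [hγ]
      positivity
    rw [hC, hc, hγ]
    field_simp
    ring
  rw [← hval]
  refine Tendsto.congr' ?_ hcomp
  filter_upwards [eventually_gt_atTop (0:ℝ)] with q hq
  have hqne : q ≠ 0 := ne_of_gt hq
  have hxpos : 0 < r * K / q := by positivity
  have hxne : r * K / q ≠ 0 := ne_of_gt hxpos
  simp only [Function.comp]
  rw [hSu q, hSl q, hg q]
  generalize (1 + r * K / q : ℝ) ^ (1 - c) = A
  generalize (1 + r * K / q : ℝ) ^ c = B
  rw [hC]
  field_simp
  ring
end

section
/- Let r, σ > 0, γ_p = -2r/σ². For g > 1 and α = 1/γ_p = -σ²/(2r), the second-order Taylor bounds hold: for ε = g - 1 sufficiently small, g^α = 1 + αε + (1/2)α(α-1)ε² + O(ε³) and g^{1-α} = 1 + (1-α)ε - (1/2)(1-α)α·ε² + O(ε³). Consequently, with S_ℓ(q) and S_u(q) as in the closed-form boundaries of the perpetual CI put (ε = rK/q), S_u(q) - S_ℓ(q) = (α(α-1)r²K²)/((r+σ²/2)·q) + O(q^{-2}) as q → ∞. -/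
open Real Filter Asymptotics

private lemma hasDerivAt_one_add_rpow (c : ℝ) {t : ℝ} (ht : 0 ≤ t) :
    HasDerivAt (fun x : ℝ => (1 + x) ^ c) (c * (1 + t) ^ (c - 1)) t := by
  have h1 : (1 + t : ℝ) ≠ 0 := by positivity
  have h2 : HasDerivAt (fun x : ℝ => 1 + x) 1 t := by
    simpa using (hasDerivAt_id t).const_add 1
  have := (Real.hasDerivAt_rpow_const (x := 1 + t) (p := c) (Or.inl h1)).comp t h2
  simp only [mul_one] at this
  exact this

private lemma taylor2_rpow_bound (a : ℝ) :
    ∃ M : ℝ, 0 < M ∧ ∀ ε ∈ Set.Icc (0:ℝ) (1/2),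
      |(1 + ε) ^ a - (1 + a * ε + a * (a - 1) / 2 * ε ^ 2)| ≤ M * ε ^ 3 := by
  set B : ℝ := max ((3/2 : ℝ) ^ (a - 3)) 1 with hB
  have hBpos : 0 < B := lt_of_lt_of_le one_pos (le_max_right _ _)
  set M3 : ℝ := |a * (a - 1) * (a - 2)| * B with hM3
  have hM3nonneg : 0 ≤ M3 := by positivity
  refine ⟨M3 + 1, by positivity, ?_⟩
  intro ε hε
  obtain ⟨hε0, hε2⟩ := hε
  set f₀ : ℝ → ℝ := fun t => (1 + t) ^ a - (1 + a * t + a * (a - 1) / 2 * t ^ 2) with hf₀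
  set f₁ : ℝ → ℝ := fun t => a * (1 + t) ^ (a - 1) - (a + a * (a - 1) * t) with hf₁
  set f₂ : ℝ → ℝ := fun t => a * (a - 1) * (1 + t) ^ (a - 2) - a * (a - 1) with hf₂
  set f₃ : ℝ → ℝ := fun t => a * (a - 1) * (a - 2) * (1 + t) ^ (a - 3) with hf₃
  -- derivative facts
  have hd0 : ∀ t : ℝ, 0 ≤ t → HasDerivAt f₀ (f₁ t) t := by
    intro t ht
    have hp : HasDerivAt (fun x : ℝ => 1 + a * x + a * (a - 1) / 2 * x ^ 2)
        (a + a * (a - 1) * t) t := by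
      have h1 : HasDerivAt (fun x : ℝ => 1 + a * x) a t := by
        simpa using ((hasDerivAt_id t).const_mul a).const_add 1
      have h2 : HasDerivAt (fun x : ℝ => a * (a - 1) / 2 * x ^ 2)
          (a * (a - 1) / 2 * (2 * t)) t := by
        simpa using (hasDerivAt_pow 2 t).const_mul (a * (a - 1) / 2)
      exact (h1.add h2).congr_deriv (by ring)
    have := (hasDerivAt_one_add_rpow a ht).sub hp
    exact this
  have hd1 : ∀ t : ℝ, 0 ≤ t → HasDerivAt f₁ (f₂ t) t := by
    intro t ht
    have hp : HasDerivAt (fun x : ℝ => a + a * (a - 1) * x) (a * (a - 1)) t := by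
      simpa using ((hasDerivAt_id t).const_mul (a * (a - 1))).const_add a
    have := ((hasDerivAt_one_add_rpow (a - 1) ht).const_mul a).sub hp
    have he : a - 1 - 1 = a - 2 := by ring
    rw [he] at this
    exact this.congr_deriv (by simp only [hf₂]; ring)
  have hd2 : ∀ t : ℝ, 0 ≤ t → HasDerivAt f₂ (f₃ t) t := by
    intro t ht
    have := ((hasDerivAt_one_add_rpow (a - 2) ht).const_mul (a * (a - 1))).sub_const
      (a * (a - 1))
    have he : a - 2 - 1 = a - 3 := by ring
    rw [he] at this
    exact this.congr_deriv (by simp only [hf₃]; ring)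
  -- bound on f₃
  have bound3 : ∀ t ∈ Set.Icc (0:ℝ) (1/2), |f₃ t| ≤ M3 := by
    intro t ht
    have h1t : (0:ℝ) < 1 + t := by linarith [ht.1]
    have hpow : (1 + t) ^ (a - 3) ≤ B := by
      rcases le_or_gt 0 (a - 3) with h | h
      · refine le_trans ?_ (le_max_left _ _)
        exact Real.rpow_le_rpow (by linarith [ht.1]) (by linarith [ht.2]) h
      · refine le_trans ?_ (le_max_right _ _)
        exact Real.rpow_le_one_of_one_le_of_nonpos (by linarith [ht.1]) h.le
    have hpos : 0 < (1 + t) ^ (a - 3) := Real.rpow_pos_of_pos h1t _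
    have : |f₃ t| = |a * (a - 1) * (a - 2)| * (1 + t) ^ (a - 3) := by
      rw [hf₃]
      rw [abs_mul, abs_of_pos hpos]
    rw [this, hM3]
    exact mul_le_mul_of_nonneg_left hpow (abs_nonneg _)
  -- iterated MVT bounds
  have hsub : ∀ {t : ℝ}, t ∈ Set.Icc (0:ℝ) ε → Set.Icc (0:ℝ) t ⊆ Set.Icc (0:ℝ) (1/2) :=
    fun {t} ht => Set.Icc_subset_Icc le_rfl (ht.2.trans hε2)
  have h2 : ∀ t ∈ Set.Icc (0:ℝ) ε, |f₂ t| ≤ M3 * t := by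
    intro t ht
    have key := norm_image_sub_le_of_norm_deriv_le_segment'
      (f := f₂) (f' := f₃) (a := 0) (b := t) (C := M3)
      (fun x hx => (hd2 x hx.1).hasDerivWithinAt)
      (fun x hx => by simpa [Real.norm_eq_abs] using bound3 x (hsub ht ⟨hx.1, hx.2.le⟩))
      t ⟨ht.1, le_rfl⟩
    have hz : f₂ 0 = 0 := by simp [hf₂]
    simpa [Real.norm_eq_abs, hz] using key
  have h1 : ∀ t ∈ Set.Icc (0:ℝ) ε, |f₁ t| ≤ M3 * ε * t := by
    intro t ht
    have key := norm_image_sub_le_of_norm_deriv_le_segment'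
      (f := f₁) (f' := f₂) (a := 0) (b := t) (C := M3 * ε)
      (fun x hx => (hd1 x hx.1).hasDerivWithinAt)
      (fun x hx => by
        have hx' : x ∈ Set.Icc (0:ℝ) ε := ⟨hx.1, hx.2.le.trans ht.2⟩
        have := h2 x hx'
        have : |f₂ x| ≤ M3 * ε :=
          this.trans (mul_le_mul_of_nonneg_left (hx.2.le.trans ht.2) hM3nonneg)
        simpa [Real.norm_eq_abs] using this)
      t ⟨ht.1, le_rfl⟩
    have hz : f₁ 0 = 0 := by simp [hf₁]
    simpa [Real.norm_eq_abs, hz] using key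
  have h0 : |f₀ ε| ≤ M3 * ε * ε * ε := by
    have key := norm_image_sub_le_of_norm_deriv_le_segment'
      (f := f₀) (f' := f₁) (a := 0) (b := ε) (C := M3 * ε * ε)
      (fun x hx => (hd0 x hx.1).hasDerivWithinAt)
      (fun x hx => by
        have := h1 x ⟨hx.1, hx.2.le⟩
        have : |f₁ x| ≤ M3 * ε * ε :=
          this.trans (mul_le_mul_of_nonneg_left hx.2.le (by positivity))
        simpa [Real.norm_eq_abs] using this)
      ε ⟨hε0, le_rfl⟩
    have hz : f₀ 0 = 0 := by simp [hf₀]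
    simpa [Real.norm_eq_abs, hz] using key
  calc |(1 + ε) ^ a - (1 + a * ε + a * (a - 1) / 2 * ε ^ 2)| = |f₀ ε| := rfl
    _ ≤ M3 * ε * ε * ε := h0
    _ ≤ (M3 + 1) * ε ^ 3 := by nlinarith [pow_nonneg hε0 3]

theorem ci_put_band_width_asymptotics
    (r σ K : ℝ) (hr : 0 < r) (hσ : 0 < σ) (hK : 0 < K)
    (γ α : ℝ) (hγ : γ = -2 * r / σ ^ 2) (hα : α = 1 / γ)
    (Sl Su : ℝ → ℝ)
    (hSl : ∀ q, Sl q = q / (r + σ ^ 2 / 2) * ((1 + r * K / q) - (1 + r * K / q) ^ (1 / γ)))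
    (hSu : ∀ q, Su q = q / (r + σ ^ 2 / 2) * ((1 + r * K / q) ^ (1 - 1 / γ) - 1)) :
    (fun ε => (1 + ε) ^ α - (1 + α * ε + 1 / 2 * α * (α - 1) * ε ^ 2))
      =O[nhdsWithin (0 : ℝ) (Set.Ioi 0)] (fun ε => ε ^ 3) ∧
    (fun ε => (1 + ε) ^ (1 - α) - (1 + (1 - α) * ε - 1 / 2 * (1 - α) * α * ε ^ 2))
      =O[nhdsWithin (0 : ℝ) (Set.Ioi 0)] (fun ε => ε ^ 3) ∧
    (fun q => Su q - Sl q - α * (α - 1) * r ^ 2 * K ^ 2 / ((r + σ ^ 2 / 2) * q))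
      =O[atTop] (fun q => q ^ (-2 : ℝ)) := by
  obtain ⟨M₁, hM₁, hT₁⟩ := taylor2_rpow_bound α
  obtain ⟨M₂, hM₂, hT₂⟩ := taylor2_rpow_bound (1 - α)
  have hmem : Set.Ioc (0:ℝ) (1/2) ∈ nhdsWithin (0 : ℝ) (Set.Ioi 0) :=
    Ioc_mem_nhdsGT_of_mem ⟨le_rfl, by norm_num⟩
  have hA : (0:ℝ) < r + σ ^ 2 / 2 := by positivity
  refine ⟨?_, ?_, ?_⟩
  · rw [isBigO_iff]
    refine ⟨M₁, ?_⟩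
    filter_upwards [hmem] with ε hε
    rw [Real.norm_eq_abs, Real.norm_eq_abs, abs_of_pos (pow_pos hε.1 3)]
    have : (1 + α * ε + 1 / 2 * α * (α - 1) * ε ^ 2)
        = (1 + α * ε + α * (α - 1) / 2 * ε ^ 2) := by ring
    rw [this]
    exact hT₁ ε ⟨hε.1.le, hε.2⟩
  · rw [isBigO_iff]
    refine ⟨M₂, ?_⟩
    filter_upwards [hmem] with ε hε
    rw [Real.norm_eq_abs, Real.norm_eq_abs, abs_of_pos (pow_pos hε.1 3)]
    have : (1 + (1 - α) * ε - 1 / 2 * (1 - α) * α * ε ^ 2)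
        = (1 + (1 - α) * ε + (1 - α) * (1 - α - 1) / 2 * ε ^ 2) := by ring
    rw [this]
    exact hT₂ ε ⟨hε.1.le, hε.2⟩
  · rw [isBigO_iff]
    refine ⟨(M₁ + M₂) * (r * K) ^ 3 / (r + σ ^ 2 / 2), ?_⟩
    filter_upwards [eventually_ge_atTop (max 1 (2 * r * K))] with q hq
    have hq1 : (1:ℝ) ≤ q := le_trans (le_max_left _ _) hq
    have hq0 : (0:ℝ) < q := lt_of_lt_of_le one_pos hq1
    have hqrK : 2 * r * K ≤ q := le_trans (le_max_right _ _) hq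
    have hε0 : 0 ≤ r * K / q := by positivity
    have hε2 : r * K / q ≤ 1/2 := by
      rw [div_le_iff₀ hq0]; nlinarith
    have hb₁ := hT₁ (r * K / q) ⟨hε0, hε2⟩
    have hb₂ := hT₂ (r * K / q) ⟨hε0, hε2⟩
    have hkey : Su q - Sl q - α * (α - 1) * r ^ 2 * K ^ 2 / ((r + σ ^ 2 / 2) * q)
        = q / (r + σ ^ 2 / 2) *
          (((1 + r * K / q) ^ α - (1 + α * (r * K / q) + α * (α - 1) / 2 * (r * K / q) ^ 2))
          + ((1 + r * K / q) ^ (1 - α) - (1 + (1 - α) * (r * K / q)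
              + (1 - α) * (1 - α - 1) / 2 * (r * K / q) ^ 2))) := by
      rw [hSu, hSl, ← hα]
      field_simp
      ring
    rw [hkey]
    have hrpow : q ^ (-2 : ℝ) = (q ^ 2)⁻¹ := by
      rw [show (-2 : ℝ) = ((-2 : ℤ) : ℝ) by norm_num, Real.rpow_intCast, zpow_neg]
      norm_cast
    rw [Real.norm_eq_abs, Real.norm_eq_abs, hrpow,
      abs_of_pos (by positivity : (0:ℝ) < (q ^ 2)⁻¹)]
    have hdivpos : (0:ℝ) < q / (r + σ ^ 2 / 2) := div_pos hq0 hA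
    have habs : |q / (r + σ ^ 2 / 2) *
          (((1 + r * K / q) ^ α - (1 + α * (r * K / q) + α * (α - 1) / 2 * (r * K / q) ^ 2))
          + ((1 + r * K / q) ^ (1 - α) - (1 + (1 - α) * (r * K / q)
              + (1 - α) * (1 - α - 1) / 2 * (r * K / q) ^ 2)))|
        ≤ q / (r + σ ^ 2 / 2) * ((M₁ + M₂) * (r * K / q) ^ 3) := by
      rw [abs_mul, abs_of_pos hdivpos]
      refine mul_le_mul_of_nonneg_left ?_ hdivpos.le
      calc |_ + _| ≤ _ := abs_add_le _ _
        _ ≤ M₁ * (r * K / q) ^ 3 + M₂ * (r * K / q) ^ 3 := add_le_add hb₁ hb₂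
        _ = (M₁ + M₂) * (r * K / q) ^ 3 := by ring
    refine habs.trans (le_of_eq ?_)
    field_simp
end
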